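/- arXiv:1707.01314 — 5 statements merged into one kernel-verified Lean document; each statement's English description precedes it below -/
import Mathlib

section
/- Let O be a complete discrete valuation ring with residue field of characteristic ℓ, and let H be the subgroup of SL_2(O) consisting of matrices congruent to an upper-triangular unipotent matrix ((1,*),(0,1)) modulo m^r, where m is the maximal ideal and r ≥ 1. Then the abelianization H^{ab} of H is a pro-ℓ group (in particular, every finite quotient of H^{ab} is an ℓ-group). -/
/-!
Let `p ≠ ℓ` be prime, so that `p` is a unit in `O`. Every `A = !![a, b; c, d] ∈ H` factors as
`!![1, b/d; 0, 1] * !![1, 0; cd, 1] * diag(1/d, d)`, and each factor is the `p`-th power of an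
element of `H`: the unipotent ones because their entries can be divided by `p`, the diagonal one
because `1/d ≡ 1 mod 𝔪^r` has a `p`-th root `≡ 1 mod 𝔪^r` by Hensel's lemma. So `p`-th powers
generate `H`, and every commutative quotient of `H` is `p`-divisible. In a finite group this makes
`x ↦ x^p` bijective, so by Cauchy's theorem `p` does not divide the order.
-/

open IsLocalRing Polynomial
open scoped MatrixGroups

theorem IsPGroup.of_surjective_pow {G : Type*} [Group G] [Finite G] {ℓ : ℕ}
    (h : ∀ p : ℕ, p.Prime → p ≠ ℓ → Function.Surjective fun g : G => g ^ p) :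
    IsPGroup ℓ G := by
  refine IsPGroup.of_card <|
    Nat.eq_prime_pow_of_unique_prime_dvd Nat.card_pos.ne' fun {p} hp hpG => ?_
  by_contra hpℓ
  have : Fact p.Prime := ⟨hp⟩
  obtain ⟨g, hg⟩ := exists_prime_orderOf_dvd_card' p hpG
  have hg1 : g = 1 :=
    Finite.injective_iff_surjective.2 (h p hp hpℓ) (by simp [← hg, pow_orderOf_eq_one])
  exact hp.one_lt.ne' (by rw [← hg, hg1, orderOf_one])

theorem Function.Surjective.surjective_pow_of_closure_range_pow_eq_top {G A : Type*} [Group G]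
    [CommGroup A] {f : G →* A} (hf : Function.Surjective f) {p : ℕ}
    (hG : Subgroup.closure (Set.range fun g : G => g ^ p) = ⊤) :
    Function.Surjective fun a : A => a ^ p := by
  intro a
  obtain ⟨g, rfl⟩ := hf a
  have hle : Subgroup.closure (Set.range fun g : G => g ^ p) ≤ (powMonoidHom p).range.comap f :=
    (Subgroup.closure_le _).2 <| by
      rintro _ ⟨x, rfl⟩
      exact ⟨f x, by simp⟩
  exact hle (hG ▸ Subgroup.mem_top g)

theorem Units.val_inv_sub_one_mem {R : Type*} [CommRing R] {J : Ideal R} {u : Rˣ}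
    (hu : (u : R) - 1 ∈ J) : ((u⁻¹ : Rˣ) : R) - 1 ∈ J := by
  have : ((u⁻¹ : Rˣ) : R) - 1 = -(↑u⁻¹ * ((u : R) - 1)) := by
    rw [mul_sub, Units.inv_mul, mul_one, neg_sub]
  exact this ▸ J.neg_mem (J.mul_mem_left _ hu)

section LocalRing

variable {R : Type*} [CommRing R] [IsLocalRing R]

theorem IsLocalRing.isUnit_of_sub_one_mem_maximalIdeal {t : R} (ht : t - 1 ∈ maximalIdeal R) :
    IsUnit t := by
  simpa using isUnit_one_sub_self_of_mem_nonunits (1 - t) (by simpa using neg_mem ht)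

theorem IsLocalRing.isUnit_natCast_of_not_dvd {ℓ : ℕ} [CharP (R ⧸ maximalIdeal R) ℓ] {n : ℕ}
    (h : ¬ ℓ ∣ n) : IsUnit (n : R) := by
  rwa [← notMem_maximalIdeal, ← Ideal.Quotient.eq_zero_iff_mem, map_natCast,
    CharP.cast_eq_zero_iff _ ℓ]

/-- Hensel's lemma gives a root `≡ 1 mod 𝔪`; dividing `u - 1 = (α - 1) ∑ αⁱ` by the unit
`∑ αⁱ ≡ p` improves this to `≡ 1 mod J`. -/
theorem IsLocalRing.exists_pow_eq_of_sub_one_mem [HenselianRing R (maximalIdeal R)] {J : Ideal R}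
    (hJ : J ≤ maximalIdeal R) {p : ℕ} (hp : IsUnit (p : R)) {u : R} (hu : u - 1 ∈ J) :
    ∃ α : R, α ^ p = u ∧ α - 1 ∈ J := by
  have hp0 : p ≠ 0 := by
    rintro rfl
    simp at hp
  obtain ⟨α, hroot, hα⟩ := HenselianRing.is_henselian (I := maximalIdeal R) (X ^ p - C u)
    (monic_X_pow_sub_C u hp0) 1 (by simpa using neg_mem (hJ hu))
    (by simpa [derivative_X_pow] using hp.map (Ideal.Quotient.mk (maximalIdeal R)))
  have hαp : α ^ p = u := by simpa [sub_eq_zero] using hroot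
  have hsum : IsUnit (∑ i ∈ Finset.range p, α ^ i) := by
    have hα1 : Ideal.Quotient.mk (maximalIdeal R) α = 1 := by
      rw [← map_one (Ideal.Quotient.mk _), Ideal.Quotient.eq]; exact hα
    rw [← notMem_maximalIdeal, ← Ideal.Quotient.eq_zero_iff_mem]
    simpa [map_sum, hα1] using (hp.map (Ideal.Quotient.mk (maximalIdeal R))).ne_zero
  refine ⟨α, hαp, ?_⟩
  have : α - 1 = ↑hsum.unit⁻¹ * (u - 1) := by
    rw [← hαp, ← geom_sum_mul, ← mul_assoc, IsUnit.val_inv_mul, one_mul]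
  exact this ▸ J.mul_mem_left _ hu

end LocalRing

namespace Matrix.SpecialLinearGroup

variable {R : Type*} [CommRing R]

def upperUnipotent (b : R) : SL(2, R) := ⟨!![1, b; 0, 1], by simp⟩

def lowerUnipotent (c : R) : SL(2, R) := ⟨!![1, 0; c, 1], by simp⟩

def diagonalUnit (u : Rˣ) : SL(2, R) := ⟨!![(u : R), 0; 0, ↑u⁻¹], by simp⟩

@[simp]
theorem coe_upperUnipotent (b : R) :
    (upperUnipotent b : Matrix (Fin 2) (Fin 2) R) = !![1, b; 0, 1] :=
  rfl

@[simp]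
theorem coe_lowerUnipotent (c : R) :
    (lowerUnipotent c : Matrix (Fin 2) (Fin 2) R) = !![1, 0; c, 1] :=
  rfl

@[simp]
theorem coe_diagonalUnit (u : Rˣ) :
    (diagonalUnit u : Matrix (Fin 2) (Fin 2) R) = !![(u : R), 0; 0, ↑u⁻¹] :=
  rfl

theorem upperUnipotent_zero : upperUnipotent (0 : R) = 1 := by
  ext i j; fin_cases i <;> fin_cases j <;> simp

theorem lowerUnipotent_zero : lowerUnipotent (0 : R) = 1 := by
  ext i j; fin_cases i <;> fin_cases j <;> simp

theorem upperUnipotent_add (a b : R) :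
    upperUnipotent (a + b) = upperUnipotent a * upperUnipotent b := by
  ext i j; fin_cases i <;> fin_cases j <;> simp [add_comm]

theorem lowerUnipotent_add (a b : R) :
    lowerUnipotent (a + b) = lowerUnipotent a * lowerUnipotent b := by
  ext i j; fin_cases i <;> fin_cases j <;> simp

theorem diagonalUnit_mul (u v : Rˣ) : diagonalUnit (u * v) = diagonalUnit u * diagonalUnit v := by
  ext i j; fin_cases i <;> fin_cases j <;> simp [mul_comm]

theorem upperUnipotent_pow (b : R) (n : ℕ) : upperUnipotent b ^ n = upperUnipotent (n * b) := by
  induction n with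
  | zero => simp [upperUnipotent_zero]
  | succ n ih => rw [pow_succ, ih, ← upperUnipotent_add, Nat.cast_succ, add_one_mul]

theorem lowerUnipotent_pow (c : R) (n : ℕ) : lowerUnipotent c ^ n = lowerUnipotent (n * c) := by
  induction n with
  | zero => simp [lowerUnipotent_zero]
  | succ n ih => rw [pow_succ, ih, ← lowerUnipotent_add, Nat.cast_succ, add_one_mul]

theorem diagonalUnit_pow (u : Rˣ) (n : ℕ) : diagonalUnit u ^ n = diagonalUnit (u ^ n) := by
  induction n with
  | zero => ext i j; fin_cases i <;> fin_cases j <;> simp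
  | succ n ih => rw [pow_succ, ih, ← diagonalUnit_mul, pow_succ]

theorem eq_upperUnipotent_mul_lowerUnipotent_mul_diagonalUnit (A : SL(2, R)) (u : Rˣ)
    (hu : A.1 1 1 = u) :
    A = upperUnipotent (A.1 0 1 * ↑u⁻¹) * lowerUnipotent (A.1 1 0 * u) * diagonalUnit u⁻¹ := by
  have hdet : A.1 0 0 * u - A.1 0 1 * A.1 1 0 = 1 := by
    rw [← hu, ← Matrix.det_fin_two]; exact A.2
  ext i j
  fin_cases i <;> fin_cases j <;> simp [hu]
  linear_combination (↑u⁻¹ : R) * hdet - (A.1 0 0 + A.1 0 1 * A.1 1 0 * ↑u⁻¹) * u.mul_inv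

end Matrix.SpecialLinearGroup

open Matrix.SpecialLinearGroup in
theorem closure_range_pow_eq_top_of_forall_mem_iff {R : Type*} [CommRing R] [IsLocalRing R]
    [HenselianRing R (maximalIdeal R)] {J : Ideal R} (hJ : J ≤ maximalIdeal R)
    {H : Subgroup SL(2, R)}
    (hH : ∀ A : SL(2, R), A ∈ H ↔ (A.1 1 0 ∈ J ∧ A.1 0 0 - 1 ∈ J ∧ A.1 1 1 - 1 ∈ J))
    {p : ℕ} (hp : IsUnit (p : R)) :
    Subgroup.closure (Set.range fun h : H => h ^ p) = ⊤ := by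
  have hU (b : R) : upperUnipotent b ∈ H := (hH _).2 (by simp)
  have hL (c : R) (hc : c ∈ J) : lowerUnipotent c ∈ H := (hH _).2 (by simpa using hc)
  have hD (α : Rˣ) (hα : (α : R) - 1 ∈ J) : diagonalUnit α ∈ H :=
    (hH _).2 ⟨by simp, by simpa using hα, by simpa using Units.val_inv_sub_one_mem hα⟩
  refine eq_top_iff.2 fun ⟨A, hA⟩ _ => ?_
  obtain ⟨hc, -, hd⟩ := (hH A).1 hA
  set d := (isUnit_of_sub_one_mem_maximalIdeal (hJ hd)).unit
  obtain ⟨α, hαp, hα⟩ :=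
    exists_pow_eq_of_sub_one_mem hJ hp (Units.val_inv_sub_one_mem (u := d) hd)
  set a := (isUnit_of_sub_one_mem_maximalIdeal (hJ hα)).unit
  set q : R := ↑hp.unit⁻¹
  have hfac : A = upperUnipotent (A.1 0 1 * ↑d⁻¹ * q) ^ p *
      lowerUnipotent (A.1 1 0 * d * q) ^ p * diagonalUnit a ^ p := by
    have hpq : (p : R) * q = 1 := hp.mul_val_inv
    have ha : a ^ p = d⁻¹ := Units.ext (by simpa [a] using hαp)
    rw [upperUnipotent_pow, lowerUnipotent_pow, diagonalUnit_pow, ha, mul_left_comm (p : R), hpq,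
      mul_one, mul_left_comm (p : R), hpq, mul_one]
    exact eq_upperUnipotent_mul_lowerUnipotent_mul_diagonalUnit A d rfl
  have hfacH : (⟨A, hA⟩ : H) = ⟨_, hU _⟩ ^ p *
      ⟨_, hL _ (J.mul_mem_right _ (J.mul_mem_right _ hc))⟩ ^ p * ⟨_, hD a hα⟩ ^ p :=
    Subtype.ext hfac
  rw [hfacH]
  exact mul_mem (mul_mem (Subgroup.subset_closure ⟨_, rfl⟩) (Subgroup.subset_closure ⟨_, rfl⟩))
    (Subgroup.subset_closure ⟨_, rfl⟩)

/-- Let `O` be a complete discrete valuation ring with residue field of characteristic `ℓ`, and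
let `H ⊆ SL₂(O)` be the subgroup of matrices congruent modulo `m^r` (`r ≥ 1`) to an
upper-triangular unipotent matrix. Then every finite quotient of the abelianization of `H` is an
`ℓ`-group. -/
theorem abelianization_congruence_unipotent_is_pro_ell
    {O : Type*} [CommRing O] [IsDomain O] [IsDiscreteValuationRing O]
    [IsAdicComplete (IsLocalRing.maximalIdeal O) O]
    (ℓ : ℕ) (hℓ : ℓ.Prime) [CharP (O ⧸ IsLocalRing.maximalIdeal O) ℓ]
    (r : ℕ) (hr : 1 ≤ r)
    (H : Subgroup (Matrix.SpecialLinearGroup (Fin 2) O))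
    (hH : ∀ A : Matrix.SpecialLinearGroup (Fin 2) O,
      A ∈ H ↔ (A.1 1 0 ∈ (IsLocalRing.maximalIdeal O) ^ r ∧
        A.1 0 0 - 1 ∈ (IsLocalRing.maximalIdeal O) ^ r ∧
        A.1 1 1 - 1 ∈ (IsLocalRing.maximalIdeal O) ^ r))
    (N : Subgroup (Abelianization H)) (hfin : Finite (Abelianization H ⧸ N)) :
    IsPGroup ℓ (Abelianization H ⧸ N) := by
  have hJ : maximalIdeal O ^ r ≤ maximalIdeal O := Ideal.pow_le_self (by omega)
  refine IsPGroup.of_surjective_pow fun p hp hpℓ => ?_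
  have hpO : IsUnit (p : O) := isUnit_natCast_of_not_dvd (ℓ := ℓ) fun hℓp =>
    hpℓ ((Nat.prime_dvd_prime_iff_eq hℓ hp).1 hℓp).symm
  have hf : Function.Surjective ((QuotientGroup.mk' N).comp (Abelianization.of (G := H))) :=
    (QuotientGroup.mk'_surjective N).comp (QuotientGroup.mk'_surjective _)
  exact hf.surjective_pow_of_closure_range_pow_eq_top
    (closure_range_pow_eq_top_of_forall_mem_iff hJ hH hpO)
end

section
/- With notation as in the U(q) coset decomposition: for Γ = Γ_1(o_F,n), Γ_0 = Γ_0(o_F,n), q a prime dividing n with totally positive generator g_q, and any γ ∈ Γ_0, one has γ·(Γ·diag(1,g_q)·Γ)·γ^{-1} = Γ·diag(1,g_q)·Γ as subsets of GL_2(F). -/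
/-!
`Γ = Γ₁(n)` is normal in `Γ₀ = Γ₀(n)` (reduce mod `n`), so conjugation by `γ ∈ Γ₀` carries
`Γ D Γ` onto `Γ (γ D γ⁻¹) Γ`, `D = diag(1, g)`, and it suffices to show `γ D γ⁻¹ ∈ Γ D Γ`.
After replacing `γ` by `δ γ` with `δ ∈ Γ` unipotent, `g` divides the upper-right entry of `γ`;
then `D adj(γ) D⁻¹` is integral, so the commutator `⁅γ, D⁆ = det(γ)⁻¹ γ (D adj(γ) D⁻¹)` lies in
`Γ`, and `γ D γ⁻¹ = δ⁻¹ ⁅δ γ, D⁆ D δ`.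
-/

open NumberField DoubleCoset
open scoped commutatorElement

section DoubleCoset

variable {G : Type*} [Group G] {Γ Γ₀ : Subgroup G}

theorem conj_mem_doubleCoset_conj_iff (hnorm : ∀ γ ∈ Γ₀, ∀ x ∈ Γ, γ * x * γ⁻¹ ∈ Γ) {γ : G}
    (hγ : γ ∈ Γ₀) (d x : G) :
    γ * x * γ⁻¹ ∈ doubleCoset (γ * d * γ⁻¹) Γ Γ ↔ x ∈ doubleCoset d Γ Γ := by
  have hconj {y} (hy : y ∈ Γ) : γ⁻¹ * y * γ ∈ Γ := by
    simpa using hnorm γ⁻¹ (Γ₀.inv_mem hγ) y hy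
  simp only [mem_doubleCoset]
  constructor
  · rintro ⟨y₁, hy₁, y₂, hy₂, h⟩
    refine ⟨γ⁻¹ * y₁ * γ, hconj hy₁, γ⁻¹ * y₂ * γ, hconj hy₂, ?_⟩
    calc x = γ⁻¹ * (γ * x * γ⁻¹) * γ := by group
      _ = _ := by rw [h]; group
  · rintro ⟨y₁, hy₁, y₂, hy₂, rfl⟩
    exact ⟨γ * y₁ * γ⁻¹, hnorm γ hγ y₁ hy₁, γ * y₂ * γ⁻¹, hnorm γ hγ y₂ hy₂, by group⟩

theorem conj_mem_doubleCoset_of_commutator_mem {γ δ d : G} (hδ : δ ∈ Γ) (h : ⁅δ * γ, d⁆ ∈ Γ) :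
    γ * d * γ⁻¹ ∈ doubleCoset d Γ Γ :=
  mem_doubleCoset.mpr ⟨δ⁻¹ * ⁅δ * γ, d⁆, Γ.mul_mem (Γ.inv_mem hδ) h, δ, hδ, by
    rw [commutatorElement_def]; group⟩

theorem conj_mem_doubleCoset_iff (hnorm : ∀ γ ∈ Γ₀, ∀ x ∈ Γ, γ * x * γ⁻¹ ∈ Γ) {d : G}
    (hd : ∀ γ ∈ Γ₀, ∃ δ ∈ Γ, ⁅δ * γ, d⁆ ∈ Γ) {γ : G} (hγ : γ ∈ Γ₀) (x : G) :
    γ * x * γ⁻¹ ∈ doubleCoset d Γ Γ ↔ x ∈ doubleCoset d Γ Γ := by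
  obtain ⟨δ, hδ, hcomm⟩ := hd γ hγ
  have h := conj_mem_doubleCoset_conj_iff hnorm hγ d x
  rwa [doubleCoset_eq_of_mem (conj_mem_doubleCoset_of_commutator_mem hδ hcomm)] at h

end DoubleCoset

theorem Matrix.map_fin_two {R S : Type*} [CommRing R] [CommRing S] (f : R →+* S) (a b c d : R) :
    (!![a, b; c, d]).map f = !![f a, f b; f c, f d] := by
  ext i j; fin_cases i <;> fin_cases j <;> rfl

theorem Matrix.val_inv_of_val_eq_map {R K : Type*} [CommRing R] [CommRing K] (f : R →+* K)
    {A : (Matrix (Fin 2) (Fin 2) K)ˣ} {M : Matrix (Fin 2) (Fin 2) R} (hA : A.val = M.map f)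
    {u : Rˣ} (hu : (u : R) = M.det) : (A⁻¹).val = ((↑u⁻¹ : R) • M.adjugate).map f := by
  refine Units.inv_eq_of_mul_eq_one_right ?_
  rw [hA, ← Matrix.map_mul, Matrix.mul_smul, Matrix.mul_adjugate, ← hu, smul_smul, u.inv_mul,
    one_smul, Matrix.map_one f f.map_zero f.map_one]

section Gamma

variable {F : Type*} [Field F]

def IsTotallyPositive (x : 𝓞 F) : Prop :=
  ∀ φ : F →+* ℝ, 0 < φ (algebraMap (𝓞 F) F x)

def IsGamma0 (n : Ideal (𝓞 F)) (A : (Matrix (Fin 2) (Fin 2) F)ˣ) : Prop :=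
  ∃ a b c d : 𝓞 F,
    A.val = !![algebraMap (𝓞 F) F a, algebraMap (𝓞 F) F b;
               algebraMap (𝓞 F) F c, algebraMap (𝓞 F) F d] ∧
    c ∈ n ∧ ∃ u : (𝓞 F)ˣ, (u : 𝓞 F) = a * d - b * c ∧ IsTotallyPositive (u : 𝓞 F)

def IsGamma1 (n : Ideal (𝓞 F)) (A : (Matrix (Fin 2) (Fin 2) F)ˣ) : Prop :=
  ∃ a b c d : 𝓞 F,
    A.val = !![algebraMap (𝓞 F) F a, algebraMap (𝓞 F) F b;
               algebraMap (𝓞 F) F c, algebraMap (𝓞 F) F d] ∧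
    c ∈ n ∧ d - 1 ∈ n ∧
    ∃ u : (𝓞 F)ˣ, (u : 𝓞 F) = a * d - b * c ∧ IsTotallyPositive (u : 𝓞 F)

theorem isGamma1_of_val_eq_map {n : Ideal (𝓞 F)} {A : (Matrix (Fin 2) (Fin 2) F)ˣ}
    {P : Matrix (Fin 2) (Fin 2) (𝓞 F)} (hA : A.val = P.map (algebraMap (𝓞 F) F))
    (h10 : P 1 0 ∈ n) (h11 : P 1 1 - 1 ∈ n) {u : (𝓞 F)ˣ} (hu : (u : 𝓞 F) = P.det)
    (hpos : IsTotallyPositive (u : 𝓞 F)) : IsGamma1 n A :=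
  ⟨P 0 0, P 0 1, P 1 0, P 1 1, hA.trans (Matrix.eta_fin_two _), h10, h11, u,
    hu.trans P.det_fin_two, hpos⟩

noncomputable def unitOfDetEqOne (P : Matrix (Fin 2) (Fin 2) (𝓞 F)) (hP : P.det = 1) :
    (Matrix (Fin 2) (Fin 2) F)ˣ :=
  Units.map ((algebraMap (𝓞 F) F).mapMatrix (m := Fin 2)).toMonoidHom
    (Matrix.nonsingInvUnit P (hP ▸ isUnit_one))

theorem val_unitOfDetEqOne {P : Matrix (Fin 2) (Fin 2) (𝓞 F)} (hP : P.det = 1) :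
    (unitOfDetEqOne P hP).val = P.map (algebraMap (𝓞 F) F) :=
  rfl

theorem isGamma1_unitOfDetEqOne {n : Ideal (𝓞 F)} {P : Matrix (Fin 2) (Fin 2) (𝓞 F)}
    (hP : P.det = 1) (h10 : P 1 0 ∈ n) (h11 : P 1 1 - 1 ∈ n) :
    IsGamma1 n (unitOfDetEqOne P hP) :=
  isGamma1_of_val_eq_map (u := 1) (val_unitOfDetEqOne hP) h10 h11 (by rw [Units.val_one, hP])
    fun φ ↦ by simp

theorem IsGamma1.conj {n : Ideal (𝓞 F)} {γ x : (Matrix (Fin 2) (Fin 2) F)ˣ} (hγ : IsGamma0 n γ)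
    (hx : IsGamma1 n x) : IsGamma1 n (γ * x * γ⁻¹) := by
  obtain ⟨a, b, c, d, hγ, hc, u, hu, -⟩ := hγ
  obtain ⟨a', b', c', d', hx, hc', hd', u', hu', hpos⟩ := hx
  set M := !![a, b; c, d]
  set N := !![a', b'; c', d']
  set v : 𝓞 F := ↑u⁻¹
  have hv : v * (a * d - b * c) = 1 := hu ▸ u.inv_mul
  have hdetM : (u : 𝓞 F) = M.det := hu.trans (Matrix.det_fin_two_of a b c d).symm
  rw [← Matrix.map_fin_two] at hγ hx
  set P := v • (M * N * M.adjugate)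
  have hP10 : P 1 0 = v * (a' * d - b' * c - d * d') * c + v * d * d * c' := by
    simp only [P, M, N, Matrix.adjugate_fin_two_of, Matrix.smul_apply, Matrix.mul_fin_two,
      Matrix.of_apply, Matrix.cons_val_one, Matrix.cons_val_zero, smul_eq_mul]
    ring
  have hP11 : P 1 1 - 1 =
      v * (b * (1 - a') + a * b') * c - v * b * d * c' + v * a * d * (d' - 1) := by
    simp only [P, M, N, Matrix.adjugate_fin_two_of, Matrix.smul_apply, Matrix.mul_fin_two,
      Matrix.of_apply, Matrix.cons_val_one, Matrix.cons_val_zero, smul_eq_mul]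
    linear_combination hv
  refine isGamma1_of_val_eq_map (P := P) ?_ ?_ ?_ (u := u') ?_ hpos
  · rw [Units.val_mul, Units.val_mul, hγ, hx, Matrix.val_inv_of_val_eq_map _ hγ hdetM,
      ← Matrix.map_mul, ← Matrix.map_mul, Matrix.mul_smul]
  · rw [hP10]
    exact n.add_mem (n.mul_mem_left _ hc) (n.mul_mem_left _ hc')
  · rw [hP11]
    exact n.add_mem (n.sub_mem (n.mul_mem_left _ hc) (n.mul_mem_left _ hc'))
      (n.mul_mem_left _ hd')
  · rw [Matrix.det_smul, Matrix.det_mul, Matrix.det_mul, Matrix.det_adjugate, ← hdetM,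
      Matrix.det_fin_two_of, ← hu', Fintype.card_fin, hu]
    linear_combination (-(u' : 𝓞 F) * (v * (a * d - b * c) + 1)) * hv

theorem isGamma1_commutator_of_dvd {n : Ideal (𝓞 F)} {γ D : (Matrix (Fin 2) (Fin 2) F)ˣ}
    {g : 𝓞 F} {M : Matrix (Fin 2) (Fin 2) (𝓞 F)} (hγ : γ.val = M.map (algebraMap (𝓞 F) F))
    (hg : g ∣ M 0 1) (hc : M 1 0 ∈ n) {u : (𝓞 F)ˣ} (hu : (u : 𝓞 F) = M.det)
    (hD : D.val = (!![1, 0; 0, g]).map (algebraMap (𝓞 F) F)) :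
    IsGamma1 n ⁅γ, D⁆ := by
  obtain ⟨β, hβ⟩ := hg
  set Dg : Matrix (Fin 2) (Fin 2) (𝓞 F) := !![1, 0; 0, g]
  -- `K = Dg * adjugate M * Dg⁻¹`, integral because `g` divides the upper-right entry of `M`
  set K : Matrix (Fin 2) (Fin 2) (𝓞 F) := !![M 1 1, -β; -(g * M 1 0), M 0 0]
  set v : 𝓞 F := ↑u⁻¹
  have hv : v * M.det = 1 := hu ▸ u.inv_mul
  have hv' : v * (M 0 0 * M 1 1 - g * β * M 1 0) = 1 := by
    rw [M.det_fin_two, hβ] at hv; linear_combination hv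
  have hK : K * Dg = Dg * M.adjugate := by
    rw [Matrix.adjugate_fin_two, hβ, Matrix.mul_fin_two, Matrix.mul_fin_two]
    ring_nf
  set P := v • (M * K)
  have hP : P * Dg * M = M * Dg := by
    calc P * Dg * M = v • (M * (K * Dg) * M) := by simp [P, Matrix.mul_assoc]
      _ = (v * M.det) • (M * Dg) := by
        rw [hK, Matrix.mul_assoc, Matrix.mul_assoc, Matrix.adjugate_mul, Matrix.mul_smul,
          Matrix.mul_one, Matrix.mul_smul, smul_smul]
      _ = M * Dg := by rw [hv, one_smul]
  have hdetP : P.det = 1 := by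
    rw [Matrix.det_smul, Matrix.det_mul, Matrix.det_fin_two_of, Fintype.card_fin, M.det_fin_two,
      hβ]
    linear_combination (v * (M 0 0 * M 1 1 - g * β * M 1 0) + 1) * hv'
  have hY : ⁅γ, D⁆ = unitOfDetEqOne P hdetP := by
    have : unitOfDetEqOne P hdetP * D * γ = γ * D := by
      ext : 1
      rw [Units.val_mul, Units.val_mul, Units.val_mul, hγ, hD, val_unitOfDetEqOne,
        ← Matrix.map_mul, ← Matrix.map_mul, hP, Matrix.map_mul]
    rw [commutatorElement_def, ← this]; group
  have hP10 : P 1 0 = v * M 1 1 * (1 - g) * M 1 0 := by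
    simp only [P, K, Matrix.smul_apply, Matrix.mul_apply, Fin.sum_univ_two, Matrix.of_apply,
      Matrix.cons_val_one, Matrix.cons_val_zero, smul_eq_mul]
    ring
  have hP11 : P 1 1 - 1 = v * β * (g - 1) * M 1 0 := by
    simp only [P, K, Matrix.smul_apply, Matrix.mul_apply, Fin.sum_univ_two, Matrix.of_apply,
      Matrix.cons_val_one, Matrix.cons_val_zero, smul_eq_mul]
    linear_combination hv'
  rw [hY]
  exact isGamma1_unitOfDetEqOne hdetP (hP10 ▸ n.mul_mem_left _ hc) (hP11 ▸ n.mul_mem_left _ hc)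

theorem IsGamma0.exists_isGamma1_commutator {n : Ideal (𝓞 F)} {g : 𝓞 F}
    (hn : n ≤ Ideal.span {g}) {γ D : (Matrix (Fin 2) (Fin 2) F)ˣ} (hγ : IsGamma0 n γ)
    (hD : D.val = !![1, 0; 0, algebraMap (𝓞 F) F g]) :
    ∃ δ, IsGamma1 n δ ∧ IsGamma1 n ⁅δ * γ, D⁆ := by
  obtain ⟨a, b, c, d, hγ, hc, u, hu, -⟩ := hγ
  obtain ⟨c', rfl⟩ := Ideal.mem_span_singleton.mp (hn hc)
  set M := !![a, b; g * c', d]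
  set v : 𝓞 F := ↑u⁻¹
  have hv : v * (a * d - b * (g * c')) = 1 := hu ▸ u.inv_mul
  -- left multiplication by `N` moves the upper-right entry into `n ⊆ (g)`
  set N : Matrix (Fin 2) (Fin 2) (𝓞 F) := !![1, -(v * a * b); 0, 1]
  have hdetN : N.det = 1 := by simp [N, Matrix.det_fin_two_of]
  have hNM : (N * M) 0 1 = g * -(v * b ^ 2 * c') := by
    simp only [N, M, Matrix.mul_fin_two, Matrix.of_apply, Matrix.cons_val_one,
      Matrix.cons_val_zero]
    linear_combination -b * hv
  refine ⟨unitOfDetEqOne N hdetN, isGamma1_unitOfDetEqOne hdetN (by simp [N]) (by simp [N]),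
    isGamma1_commutator_of_dvd (M := N * M) ?_ ⟨_, hNM⟩ (by simpa [N, M] using hc) (u := u) ?_ ?_⟩
  · rw [Units.val_mul, val_unitOfDetEqOne, hγ, ← Matrix.map_fin_two, Matrix.map_mul]
  · rw [Matrix.det_mul, hdetN, one_mul, hu, Matrix.det_fin_two_of]
  · rw [hD, Matrix.map_fin_two, map_one, map_zero]

end Gamma

theorem U_q_double_coset_Gamma0_invariant_general
    (F : Type*) [Field F]
    (n q : Ideal (𝓞 F)) (hdvd : q ∣ n)
    (g : 𝓞 F) (hg : q = Ideal.span {g})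
    (Γ Γ₀ : Subgroup (Matrix (Fin 2) (Fin 2) F)ˣ)
    (hΓ : ∀ A : (Matrix (Fin 2) (Fin 2) F)ˣ, A ∈ Γ ↔
      ∃ a b c d : 𝓞 F,
        A.val = !![algebraMap (𝓞 F) F a, algebraMap (𝓞 F) F b;
                   algebraMap (𝓞 F) F c, algebraMap (𝓞 F) F d] ∧
        c ∈ n ∧ d - 1 ∈ n ∧
        ∃ u : (𝓞 F)ˣ, (u : 𝓞 F) = a * d - b * c ∧
          ∀ φ : F →+* ℝ, 0 < φ (algebraMap (𝓞 F) F (u : 𝓞 F)))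
    (hΓ₀ : ∀ A : (Matrix (Fin 2) (Fin 2) F)ˣ, A ∈ Γ₀ ↔
      ∃ a b c d : 𝓞 F,
        A.val = !![algebraMap (𝓞 F) F a, algebraMap (𝓞 F) F b;
                   algebraMap (𝓞 F) F c, algebraMap (𝓞 F) F d] ∧
        c ∈ n ∧
        ∃ u : (𝓞 F)ˣ, (u : 𝓞 F) = a * d - b * c ∧
          ∀ φ : F →+* ℝ, 0 < φ (algebraMap (𝓞 F) F (u : 𝓞 F)))
    (dEl : (Matrix (Fin 2) (Fin 2) F)ˣ)
    (hdEl : dEl.val = !![1, 0; 0, algebraMap (𝓞 F) F g])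
    (γ₀ : (Matrix (Fin 2) (Fin 2) F)ˣ) (hγ₀ : γ₀ ∈ Γ₀) :
    ∀ x : (Matrix (Fin 2) (Fin 2) F)ˣ,
      (∃ γ₁ ∈ Γ, ∃ γ₂ ∈ Γ, γ₀ * x * γ₀⁻¹ = γ₁ * dEl * γ₂) ↔
      (∃ γ₁ ∈ Γ, ∃ γ₂ ∈ Γ, x = γ₁ * dEl * γ₂) := by
  have hnorm : ∀ γ ∈ Γ₀, ∀ x ∈ Γ, γ * x * γ⁻¹ ∈ Γ := fun γ hγ x hx ↦
    (hΓ _).mpr (IsGamma1.conj ((hΓ₀ γ).mp hγ) ((hΓ x).mp hx))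
  have hcomm : ∀ γ ∈ Γ₀, ∃ δ ∈ Γ, ⁅δ * γ, dEl⁆ ∈ Γ := fun γ hγ ↦ by
    obtain ⟨δ, hδ, h⟩ := IsGamma0.exists_isGamma1_commutator (hg ▸ Ideal.le_of_dvd hdvd)
      ((hΓ₀ γ).mp hγ) hdEl
    exact ⟨δ, (hΓ δ).mpr hδ, (hΓ _).mpr h⟩
  intro x
  simpa only [mem_doubleCoset, SetLike.mem_coe] using conj_mem_doubleCoset_iff hnorm hcomm hγ₀ x

/-- **Γ₀-invariance of the `U(q)` double coset.**  With `Γ = Γ₁(o_F,n)`, `Γ₀ = Γ₀(o_F,n)`,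
`q` a prime dividing `n` with totally positive generator `g`, and any `γ₀ ∈ Γ₀`, conjugation by
`γ₀` preserves the double coset `Γ·diag(1,g)·Γ` as a subset of `GL₂(F)`. -/
theorem U_q_double_coset_Gamma0_invariant
    (F : Type*) [Field F] [NumberField F]
    (htot : ∀ v : InfinitePlace F, v.IsReal)
    (hncl : ∀ I : Ideal (𝓞 F), I ≠ ⊥ → ∃ a : 𝓞 F, I = Ideal.span {a} ∧
      ∀ φ : F →+* ℝ, 0 < φ (algebraMap (𝓞 F) F a))
    (n q : Ideal (𝓞 F)) (hn : n ≠ ⊥) (hq : q.IsPrime) (hq0 : q ≠ ⊥) (hdvd : q ∣ n)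
    (g : 𝓞 F) (hg : q = Ideal.span {g})
    (hgpos : ∀ φ : F →+* ℝ, 0 < φ (algebraMap (𝓞 F) F g))
    (Γ Γ₀ : Subgroup (Matrix (Fin 2) (Fin 2) F)ˣ)
    (hΓ : ∀ A : (Matrix (Fin 2) (Fin 2) F)ˣ, A ∈ Γ ↔
      ∃ a b c d : 𝓞 F,
        A.val = !![algebraMap (𝓞 F) F a, algebraMap (𝓞 F) F b;
                   algebraMap (𝓞 F) F c, algebraMap (𝓞 F) F d] ∧
        c ∈ n ∧ d - 1 ∈ n ∧
        ∃ u : (𝓞 F)ˣ, (u : 𝓞 F) = a * d - b * c ∧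
          ∀ φ : F →+* ℝ, 0 < φ (algebraMap (𝓞 F) F (u : 𝓞 F)))
    (hΓ₀ : ∀ A : (Matrix (Fin 2) (Fin 2) F)ˣ, A ∈ Γ₀ ↔
      ∃ a b c d : 𝓞 F,
        A.val = !![algebraMap (𝓞 F) F a, algebraMap (𝓞 F) F b;
                   algebraMap (𝓞 F) F c, algebraMap (𝓞 F) F d] ∧
        c ∈ n ∧
        ∃ u : (𝓞 F)ˣ, (u : 𝓞 F) = a * d - b * c ∧
          ∀ φ : F →+* ℝ, 0 < φ (algebraMap (𝓞 F) F (u : 𝓞 F)))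
    (dEl : (Matrix (Fin 2) (Fin 2) F)ˣ)
    (hdEl : dEl.val = !![1, 0; 0, algebraMap (𝓞 F) F g])
    (γ₀ : (Matrix (Fin 2) (Fin 2) F)ˣ) (hγ₀ : γ₀ ∈ Γ₀) :
    ∀ x : (Matrix (Fin 2) (Fin 2) F)ˣ,
      (∃ γ₁ ∈ Γ, ∃ γ₂ ∈ Γ, γ₀ * x * γ₀⁻¹ = γ₁ * dEl * γ₂) ↔
      (∃ γ₁ ∈ Γ, ∃ γ₂ ∈ Γ, x = γ₁ * dEl * γ₂) :=
  U_q_double_coset_Gamma0_invariant_general F n q hdvd g hg Γ Γ₀ hΓ hΓ₀ dEl hdEl γ₀ hγ₀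
end

section
/- Let F be a real quadratic field with narrow class number 1, n = q a prime ideal coprime to 6·Δ_F, Γ = Γ_1(o_F, q), and α = ((x,β),(y,δ)) ∈ SL_2(o_F). Then the stabilizer intersection: the image of α^{-1}Γα ∩ U_∞ in PGL_2 is isomorphic, as an abelian group, to the fractional ideal q^{1−e}, where U_∞ is the group of upper-triangular unipotent matrices over F and (y) + q = q^e (e ∈ {0,1}). -/
open NumberField

/-- **Unipotent stabilizer at a cusp.**  Let `F` be a real quadratic field with narrow class
number `1`, `q` a prime ideal coprime to `6·Δ_F`, `Γ = Γ₁(o_F, q)`, and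
`α = ((x,β),(y,δ)) ∈ SL₂(o_F)`.  Writing `(y) + q = q^e` with `e ∈ {0,1}`, the set of `b ∈ F`
with `α⁻¹·((1,b),(0,1))·α ∈ Γ` is exactly the fractional ideal `q^{1-e}`; in particular the
image of `α⁻¹Γα ∩ U_∞` in `PGL₂` is isomorphic as an abelian group to `q^{1-e}`. -/
theorem unipotent_stabilizer_eq_fractional_ideal
    (F : Type*) [Field F] [NumberField F]
    (hdeg : Module.finrank ℚ F = 2)
    (htot : ∀ v : InfinitePlace F, v.IsReal)
    (hncl : ∀ I : Ideal (𝓞 F), I ≠ ⊥ → ∃ a : 𝓞 F, I = Ideal.span {a} ∧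
      ∀ φ : F →+* ℝ, 0 < φ (algebraMap (𝓞 F) F a))
    (q : Ideal (𝓞 F)) (hq : q.IsPrime) (hq0 : q ≠ ⊥)
    (hcop : Ideal.span {((6 * NumberField.discr F : ℤ) : 𝓞 F)} ⊔ q = ⊤)
    (Γ : Subgroup (Matrix (Fin 2) (Fin 2) F)ˣ)
    (hΓ : ∀ A : (Matrix (Fin 2) (Fin 2) F)ˣ, A ∈ Γ ↔
      ∃ a b c d : 𝓞 F,
        A.val = !![algebraMap (𝓞 F) F a, algebraMap (𝓞 F) F b;
                   algebraMap (𝓞 F) F c, algebraMap (𝓞 F) F d] ∧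
        c ∈ q ∧ d - 1 ∈ q ∧
        ∃ u : (𝓞 F)ˣ, (u : 𝓞 F) = a * d - b * c ∧
          ∀ φ : F →+* ℝ, 0 < φ (algebraMap (𝓞 F) F (u : 𝓞 F)))
    (x β y δ : 𝓞 F)
    (α : (Matrix (Fin 2) (Fin 2) F)ˣ)
    (hα : α.val = !![algebraMap (𝓞 F) F x, algebraMap (𝓞 F) F β;
                     algebraMap (𝓞 F) F y, algebraMap (𝓞 F) F δ])
    (hdet : x * δ - β * y = 1)
    (u : F → (Matrix (Fin 2) (Fin 2) F)ˣ)
    (hu : ∀ b : F, (u b).val = !![1, b; 0, 1])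
    (e : ℕ) (he : e ≤ 1) (hy : Ideal.span {y} ⊔ q = q ^ e) :
    ∀ b : F, (α⁻¹ * u b * α ∈ Γ) ↔
      b ∈ ((q : FractionalIdeal (nonZeroDivisors (𝓞 F)) F) ^ ((1 : ℤ) - (e : ℤ))) := by

  intro b
  set f := algebraMap (𝓞 F) F with hf
  have hinj : Function.Injective f := IsFractionRing.injective _ _
  have hdetF : f x * f δ - f β * f y = 1 := by
    have := congrArg f hdet
    simpa only [map_sub, map_mul, map_one] using this
  -- the conjugated matrix
  have hval : (α⁻¹ * u b * α).val =
      !![1 + b * f y * f δ, b * f δ * f δ; -(b * f y * f y), 1 - b * f y * f δ] := by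
    have h1 : (u b).val * α.val =
        α.val * !![1 + b * f y * f δ, b * f δ * f δ; -(b * f y * f y), 1 - b * f y * f δ] := by
      rw [hu, hα]
      ext i j
      fin_cases i <;> fin_cases j <;>
        simp [Matrix.mul_apply, Fin.sum_univ_two]
      · linear_combination (-(b * f y)) * hdetF
      · linear_combination (-(b * f δ)) * hdetF
      · ring
      · ring
    have h2 : (α⁻¹ * u b * α).val = α⁻¹.val * ((u b).val * α.val) := by
      simp [Units.val_mul, mul_assoc]
    rw [h2, h1, ← mul_assoc, ← Units.val_mul, inv_mul_cancel, Units.val_one, one_mul]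
  -- membership in Γ in explicit form
  have hmemΓ : (α⁻¹ * u b * α ∈ Γ) ↔
      ∃ a b₀ c d : 𝓞 F,
        (1 + b * f y * f δ = f a ∧ b * f δ * f δ = f b₀ ∧
         -(b * f y * f y) = f c ∧ 1 - b * f y * f δ = f d) ∧
        c ∈ q ∧ d - 1 ∈ q := by
    rw [hΓ]
    constructor
    · rintro ⟨a, b₀, c, d, hmat, hcq, hdq, -⟩
      refine ⟨a, b₀, c, d, ?_, hcq, hdq⟩
      rw [hval] at hmat
      refine ⟨?_, ?_, ?_, ?_⟩
      · simpa using congrFun (congrFun hmat 0) 0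
      · simpa using congrFun (congrFun hmat 0) 1
      · simpa using congrFun (congrFun hmat 1) 0
      · simpa using congrFun (congrFun hmat 1) 1
    · rintro ⟨a, b₀, c, d, ⟨h00, h01, h10, h11⟩, hcq, hdq⟩
      refine ⟨a, b₀, c, d, ?_, hcq, hdq, 1, ?_, ?_⟩
      · rw [hval]
        ext i j
        fin_cases i <;> fin_cases j <;> simp [h00, h01, h10, h11]
      · apply hinj
        simp only [Units.val_one, map_one, map_sub, map_mul]
        rw [← h00, ← h01, ← h10, ← h11]
        ring
      · intro φ
        simp
  rw [hmemΓ]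
  -- coprimality identity
  have hone : x * x * (δ * δ) - 2 * x * β * (y * δ) + β * β * (y * y) = 1 := by
    linear_combination (x * δ - β * y + 1) * hdet
  interval_cases e
  · -- e = 0 : y ∉ q, target is q
    have hynq : y ∉ q := by
      intro hyq
      have : Ideal.span {y} ⊔ q = q := by
        rw [sup_eq_right]
        exact (Ideal.span_singleton_le_iff_mem q).mpr hyq
      rw [pow_zero] at hy
      exact hq.ne_top (by rw [← this, hy, Ideal.one_eq_top])
    rw [show ((1 : ℤ) - ((0:ℕ) : ℤ)) = 1 by norm_num, zpow_one, FractionalIdeal.mem_coeIdeal]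
    constructor
    · rintro ⟨a, b₀, c, d, ⟨h00, h01, h10, h11⟩, hcq, hdq⟩
      refine ⟨x * x * b₀ - 2 * x * β * (1 - d) + β * β * (-c), ?_, ?_⟩
      · -- membership in q
        have hwy : (x * x * b₀ - 2 * x * β * (1 - d) + β * β * (-c)) * (y * y) = -c * 1 := by
          apply hinj
          simp only [map_mul, map_sub, map_add, map_one, map_neg, map_ofNat]
          linear_combination (-(f x * f x * f y * f y)) * h01 - (2 * f x * f β * f y * f y) * h11
            + (f β * f β * f y * f y - 1) * h10
            + (b * f y * f y * (f x * f δ - f β * f y + 1)) * hdetF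
        rw [mul_one] at hwy
        have hmem : (x * x * b₀ - 2 * x * β * (1 - d) + β * β * (-c)) * (y * y) ∈ q := by
          rw [hwy]; exact neg_mem hcq
        rcases hq.mem_or_mem hmem with h | h
        · exact h
        · rcases hq.mem_or_mem h with h' | h' <;> exact absurd h' hynq
      · simp only [map_mul, map_sub, map_add, map_one, map_neg, map_ofNat]
        linear_combination (f x * f x) * h01.symm + (2 * f x * f β) * h11.symm
          - (f β * f β) * h10.symm + (b * (f x * f δ - f β * f y + 1)) * hdetF
    · rintro ⟨c, hcq, rfl⟩
      refine ⟨1 + c * y * δ, c * δ * δ, -(c * y * y), 1 - c * y * δ, ?_, neg_mem ?_, ?_⟩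
      · simp only [map_add, map_mul, map_sub, map_one, map_neg]
        refine ⟨by ring, by ring, by ring, by ring⟩
      · exact Ideal.mul_mem_right _ _ (Ideal.mul_mem_right _ _ hcq)
      · have : (1 - c * y * δ) - 1 = -(c * y * δ) := by ring
        rw [this]
        exact neg_mem (Ideal.mul_mem_right _ _ (Ideal.mul_mem_right _ _ hcq))
  · -- e = 1 : y ∈ q, target is 𝓞
    have hyq : y ∈ q := by
      have : Ideal.span {y} ≤ q := by
        rw [← pow_one q, ← hy]; exact le_sup_left
      exact this (Ideal.mem_span_singleton_self y)
    rw [show ((1 : ℤ) - ((1:ℕ) : ℤ)) = 0 by norm_num, zpow_zero, FractionalIdeal.mem_one_iff]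
    constructor
    · rintro ⟨a, b₀, c, d, ⟨h00, h01, h10, h11⟩, hcq, hdq⟩
      refine ⟨x * x * b₀ - 2 * x * β * (1 - d) + β * β * (-c), ?_⟩
      simp only [map_mul, map_sub, map_add, map_one, map_neg, map_ofNat]
      linear_combination (f x * f x) * h01.symm + (2 * f x * f β) * h11.symm
        - (f β * f β) * h10.symm + (b * (f x * f δ - f β * f y + 1)) * hdetF
    · rintro ⟨c, rfl⟩
      refine ⟨1 + c * y * δ, c * δ * δ, -(c * y * y), 1 - c * y * δ, ?_, neg_mem ?_, ?_⟩
      · simp only [map_add, map_mul, map_sub, map_one, map_neg]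
        refine ⟨by ring, by ring, by ring, by ring⟩
      · exact Ideal.mul_mem_right _ _ (Ideal.mul_mem_left _ _ hyq)
      · have : (1 - c * y * δ) - 1 = -(c * y * δ) := by ring
        rw [this]
        exact neg_mem (Ideal.mul_mem_right _ _ (Ideal.mul_mem_left _ _ hyq))
end

section
/- Let O be a DVR with fraction field K and residue field κ, H a commutative O-algebra acting on O-modules, p a prime ideal of H with H/p ≅ O, and M a finite O-module with H-action such that M[p] is free of rank 1 over O and M/M[p] is torsion-free. If additionally dim_κ (M/π)[m] = 1 where m = (π, p), then the natural map M[p]/π → (M/π)[m] is an isomorphism. -/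
/-!
The image of `x₀` in `M/π` is nonzero: if `x₀ = π z`, torsion-freeness of `M/M[p]` puts `z` in
`M[p] = O x₀`, so `x₀ = π c x₀` and freeness gives `π c = 1`. This image lies in `(M/π)[m]`,
a line killed by the maximal ideal `(π)` of `O`, so it spans that line: the map is surjective.
Injectivity is again torsion-freeness of `M/M[p]`.
-/

open Submodule

namespace Submodule

theorem mkQ_mem_torsionBySet_sup {R M : Type*} [CommRing R] [AddCommGroup M] [Module R M]
    {I J : Ideal R} {y : M} (hy : y ∈ torsionBySet R M I) :
    (J • ⊤ : Submodule R M).mkQ y ∈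
      torsionBySet R (M ⧸ J • (⊤ : Submodule R M)) ↑(I ⊔ J) := by
  rw [mem_torsionBySet_iff] at hy ⊢
  rintro ⟨_, hab⟩
  obtain ⟨a, ha, b, hb, rfl⟩ := mem_sup.mp hab
  rw [add_smul, ← map_smul, ← map_smul, hy ⟨a, ha⟩, map_zero, zero_add, mkQ_apply,
    Quotient.mk_eq_zero]
  exact smul_mem_smul hb mem_top

theorem exists_eq_smul_of_mem_span_algebraMap_smul_top {R A M : Type*} [CommRing R]
    [CommRing A] [Algebra R A] [AddCommGroup M] [Module R M] [Module A M] [IsScalarTower R A M]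
    {r : R} {m : M} (hm : m ∈ (Ideal.span {algebraMap R A r} • ⊤ : Submodule A M)) :
    ∃ z : M, m = r • z := by
  rw [ideal_span_singleton_smul] at hm
  obtain ⟨z, -, hz⟩ := hm
  exact ⟨z, by rw [← hz, DistribSMul.toLinearMap_apply, algebraMap_smul]⟩

end Submodule

theorem ne_smul_of_cyclic_of_saturated {R M : Type*} [CommRing R] [AddCommGroup M] [Module R M]
    {S : Set M} {π : R} (hπ : ¬IsUnit π) {x₀ : M} (hx₀ : x₀ ∈ S)
    (hgen : ∀ y ∈ S, ∃ c : R, y = c • x₀) (hfree : ∀ c : R, c • x₀ = 0 → c = 0)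
    (hsat : ∀ z : M, π • z ∈ S → z ∈ S) (z : M) : x₀ ≠ π • z := by
  intro hz
  obtain ⟨c, rfl⟩ := hgen z (hsat z (hz ▸ hx₀))
  have h : (1 - π * c) • x₀ = 0 := by
    rw [sub_smul, one_smul, mul_smul, ← hz, sub_self]
  exact hπ (IsUnit.of_mul_eq_one (a := π) c (sub_eq_zero.mp (hfree _ h)).symm)

theorem IsLocalRing.span_singleton_eq_of_ne_zero {R M : Type*} [CommRing R] [IsLocalRing R]
    [AddCommGroup M] [Module R M] {x v : M} (hx : ∀ c ∈ IsLocalRing.maximalIdeal R, c • x = 0)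
    (hv : v ∈ R ∙ x) (hv0 : v ≠ 0) : (R ∙ v) = (R ∙ x) := by
  obtain ⟨c, rfl⟩ := mem_span_singleton.mp hv
  have hc : IsUnit c := by
    by_contra hc
    exact hv0 (hx c ((IsLocalRing.mem_maximalIdeal c).mpr hc))
  exact span_singleton_smul_eq hc x

theorem torsion_part_mod_pi_iso_general
    {O H M : Type*} [CommRing O] [IsDomain O] [IsDiscreteValuationRing O]
    (π : O) (hπ : Irreducible π)
    [CommRing H] [Algebra O H]
    [AddCommGroup M] [Module O M] [Module H M] [IsScalarTower O H M]
    (p : Ideal H)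
    (x₀ : M) (hx₀ : x₀ ∈ Submodule.torsionBySet H M (p : Set H))
    (hgen : ∀ y ∈ Submodule.torsionBySet H M (p : Set H), ∃ c : O, y = c • x₀)
    (hfree : ∀ c : O, c • x₀ = 0 → c = 0)
    (hquot : ∀ (c : O) (m : M), c ≠ 0 → c • m ∈ Submodule.torsionBySet H M (p : Set H) →
      m ∈ Submodule.torsionBySet H M (p : Set H))
    (mI : Ideal H) (hmI : mI = p ⊔ Ideal.span {algebraMap O H π})
    (xbar : M ⧸ (Ideal.span {algebraMap O H π} • (⊤ : Submodule H M)))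
    (hxbar : xbar ∈ Submodule.torsionBySet H
      (M ⧸ (Ideal.span {algebraMap O H π} • (⊤ : Submodule H M))) (mI : Set H))
    (hdim : ∀ y ∈ Submodule.torsionBySet H
        (M ⧸ (Ideal.span {algebraMap O H π} • (⊤ : Submodule H M))) (mI : Set H),
      ∃ c : O, y = c • xbar) :
    (LinearMap.range
        ((Submodule.mkQ (Ideal.span {algebraMap O H π} • (⊤ : Submodule H M))).comp
          (Submodule.torsionBySet H M (p : Set H)).subtype)
      = Submodule.torsionBySet H
          (M ⧸ (Ideal.span {algebraMap O H π} • (⊤ : Submodule H M))) (mI : Set H))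
    ∧ ∀ y ∈ Submodule.torsionBySet H M (p : Set H),
        (∃ z : M, y = algebraMap O H π • z) →
        ∃ w ∈ Submodule.torsionBySet H M (p : Set H), y = algebraMap O H π • w := by
  have hsat : ∀ z : M, π • z ∈ torsionBySet H M p → z ∈ torsionBySet H M p :=
    fun z => hquot π z hπ.ne_zero
  have hπm : algebraMap O H π ∈ mI :=
    hmI ▸ Ideal.mem_sup_right (Ideal.mem_span_singleton_self _)
  generalize hN : (Ideal.span {algebraMap O H π} • ⊤ : Submodule H M) = N at *
  have hmk : ∀ y ∈ torsionBySet H M p, N.mkQ y ∈ torsionBySet H (M ⧸ N) mI :=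
    fun y hy => hN ▸ hmI ▸ mkQ_mem_torsionBySet_sup hy
  have hx₀_ne : N.mkQ x₀ ≠ 0 := fun h => by
    obtain ⟨z, hz⟩ := exists_eq_smul_of_mem_span_algebraMap_smul_top
      (hN ▸ (Quotient.mk_eq_zero N).mp h)
    exact ne_smul_of_cyclic_of_saturated hπ.not_isUnit hx₀ hgen hfree hsat z hz
  have hxbar_kill : ∀ c ∈ IsLocalRing.maximalIdeal O, c • xbar = 0 := by
    intro c hc
    obtain ⟨d, rfl⟩ := Ideal.mem_span_singleton.mp (hπ.maximalIdeal_eq ▸ hc)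
    rw [mul_comm, mul_smul, ← algebraMap_smul H π xbar,
      (mem_torsionBySet_iff _ _).mp hxbar ⟨_, hπm⟩, smul_zero]
  have hspan : (O ∙ N.mkQ x₀) = (O ∙ xbar) := by
    obtain ⟨c, hc⟩ := hdim _ (hmk x₀ hx₀)
    exact IsLocalRing.span_singleton_eq_of_ne_zero hxbar_kill
      (mem_span_singleton.mpr ⟨c, hc.symm⟩) hx₀_ne
  refine ⟨le_antisymm ?_ fun y hy => ?_, fun y hy ⟨z, hz⟩ => ⟨z, hsat z ?_, hz⟩⟩
  · rintro _ ⟨⟨y, hy⟩, rfl⟩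
    exact hmk y hy
  · obtain ⟨c, hc⟩ := hdim y hy
    obtain ⟨e, he⟩ := mem_span_singleton.mp (hspan ▸ mem_span_singleton.mpr ⟨c, hc.symm⟩)
    exact ⟨⟨e • x₀, smul_of_tower_mem _ e hx₀⟩, he⟩
  · rwa [hz, algebraMap_smul] at hy

/-- Abstract form of "Fil f mod pi (2)".  Let `O` be a DVR with uniformizer `π`, `H` a
commutative `O`-algebra, `p` a prime ideal of `H` with `H/p ≅ O` (realized by a surjection
`ψ : H → O` with kernel `p`), and `M` a finite `O`-module with `H`-action such that the
`p`-torsion `M[p]` is free of rank `1` over `O` (generated by `x₀`) and `M/M[p]` is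
torsion-free.  If moreover `(M/π)[m]` is one-dimensional over `κ` for `m = p + (π)` (generated
by `xbar`), then the natural map `M[p]/π → (M/π)[m]` is an isomorphism: it is surjective (its
range is all of `(M/π)[m]`) and injective (any element of `M[p]` divisible by `π` in `M` is
divisible by `π` inside `M[p]`). -/
theorem torsion_part_mod_pi_iso
    {O H M : Type*} [CommRing O] [IsDomain O] [IsDiscreteValuationRing O]
    (π : O) (hπ : Irreducible π)
    [CommRing H] [Algebra O H]
    [AddCommGroup M] [Module O M] [Module H M] [IsScalarTower O H M]
    [Module.Finite O M]
    (p : Ideal H) (hp : p.IsPrime)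
    (ψ : H →+* O) (hψ : Function.Surjective ψ) (hker : RingHom.ker ψ = p)
    (x₀ : M) (hx₀ : x₀ ∈ Submodule.torsionBySet H M (p : Set H))
    (hgen : ∀ y ∈ Submodule.torsionBySet H M (p : Set H), ∃ c : O, y = c • x₀)
    (hfree : ∀ c : O, c • x₀ = 0 → c = 0)
    (hquot : ∀ (c : O) (m : M), c ≠ 0 → c • m ∈ Submodule.torsionBySet H M (p : Set H) →
      m ∈ Submodule.torsionBySet H M (p : Set H))
    (mI : Ideal H) (hmI : mI = p ⊔ Ideal.span {algebraMap O H π})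
    (xbar : M ⧸ (Ideal.span {algebraMap O H π} • (⊤ : Submodule H M)))
    (hxbar : xbar ∈ Submodule.torsionBySet H
      (M ⧸ (Ideal.span {algebraMap O H π} • (⊤ : Submodule H M))) (mI : Set H))
    (hxbar0 : xbar ≠ 0)
    (hdim : ∀ y ∈ Submodule.torsionBySet H
        (M ⧸ (Ideal.span {algebraMap O H π} • (⊤ : Submodule H M))) (mI : Set H),
      ∃ c : O, y = c • xbar) :
    (LinearMap.range
        ((Submodule.mkQ (Ideal.span {algebraMap O H π} • (⊤ : Submodule H M))).comp
          (Submodule.torsionBySet H M (p : Set H)).subtype)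
      = Submodule.torsionBySet H
          (M ⧸ (Ideal.span {algebraMap O H π} • (⊤ : Submodule H M))) (mI : Set H))
    ∧ ∀ y ∈ Submodule.torsionBySet H M (p : Set H),
        (∃ z : M, y = algebraMap O H π • z) →
        ∃ w ∈ Submodule.torsionBySet H M (p : Set H), y = algebraMap O H π • w :=
  torsion_part_mod_pi_iso_general π hπ p x₀ hx₀ hgen hfree hquot mI hmI xbar hxbar hdim
end

section
/- Let q and r be prime ideals with q dividing the level n, Γ = Γ_1(o_F,n), g_q a totally positive generator of q, and s ∈ P^1(F) a cusp Γ_0-equivalent to ∞. Then for every b ∈ o_F (representing a class of o_F/q), the cusp α_b(s) is Γ-equivalent to s, where α_b = ((1,b),(0,g_q)). -/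
open NumberField

theorem alpha_cusp_ring_aux {K : Type*} [CommRing K] (a₀ c₀ D' C' b g p₁ q₁ : K)
    (h1 : a₀ * D' + c₀ * C' = 1)
    (h3 : p₁ * (a₀ + b * c₀) + g * q₁ = 1) :
    ∃ A B C D eK fK : K,
      A * D - B * C = 1 ∧
      C = c₀ * eK ∧
      D - 1 = c₀ * fK ∧
      A * a₀ + B * c₀ = a₀ + b * c₀ ∧
      C * a₀ + D * c₀ = g * c₀ := by
  have h2 : (a₀ + b * c₀) * D' + c₀ * (C' - b * D') = 1 := by linear_combination h1
  set P := p₁ * ((a₀ + b * c₀) * D') + p₁ * (c₀ * (C' - b * D')) + g * (q₁ * D') with hP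
  set R := q₁ * (C' - b * D') with hR
  have h4 : (a₀ + b * c₀) * P + (g * c₀) * R = 1 := by
    rw [hP, hR]
    linear_combination ((a₀ + b * c₀) * D' + c₀ * (C' - b * D')) * h3 + h2
  set t := D' - P * c₀ * (b * D' - C') with ht
  set y := R * c₀ * (b * D' - C') with hy
  have h5 : (a₀ + b * c₀) * t - y * (g * c₀) = 1 := by
    rw [ht, hy]
    linear_combination h1 - (c₀ * (b * D' - C')) * h4
  refine ⟨(a₀ + b * c₀) * D' - y * c₀, (a₀ + b * c₀) * C' + y * a₀,
    g * c₀ * D' - t * c₀, g * c₀ * C' + t * a₀,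
    g * D' - t, g * C' - C' - a₀ * P * (b * D' - C'), ?_, ?_, ?_, ?_, ?_⟩
  · linear_combination (a₀ * D' + c₀ * C') * h5 + h1
  · ring
  · rw [ht]; linear_combination h1
  · linear_combination (a₀ + b * c₀) * h1
  · linear_combination (g * c₀) * h1


/-- **`α_b` preserves the `Γ`-class of cusps `Γ₀`-equivalent to `∞`.**  Let `q` be a prime
dividing the level `n`, `Γ = Γ₁(o_F,n)`, `Γ₀ = Γ₀(o_F,n)`, `g` a totally positive generator of
`q`, and `α_b = ((1,b),(0,g))`.  If the cusp `s ∈ ℙ¹(F)` (represented by a nonzero vector `v`)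
is `Γ₀`-equivalent to `∞` (represented by `(1,0)`), then for every `b ∈ o_F` the cusp `α_b(s)`
is `Γ`-equivalent to `s`. -/
theorem alpha_b_preserves_cusp_class
    (F : Type*) [Field F] [NumberField F]
    (htot : ∀ v : InfinitePlace F, v.IsReal)
    (n q : Ideal (𝓞 F)) (hn : n ≠ ⊥) (hq : q.IsPrime) (hq0 : q ≠ ⊥) (hdvd : q ∣ n)
    (g : 𝓞 F) (hg : q = Ideal.span {g})
    (hgpos : ∀ φ : F →+* ℝ, 0 < φ (algebraMap (𝓞 F) F g))
    (Γ Γ₀ : Subgroup (Matrix (Fin 2) (Fin 2) F)ˣ)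
    (hΓ : ∀ A : (Matrix (Fin 2) (Fin 2) F)ˣ, A ∈ Γ ↔
      ∃ a b c d : 𝓞 F,
        A.val = !![algebraMap (𝓞 F) F a, algebraMap (𝓞 F) F b;
                   algebraMap (𝓞 F) F c, algebraMap (𝓞 F) F d] ∧
        c ∈ n ∧ d - 1 ∈ n ∧
        ∃ u : (𝓞 F)ˣ, (u : 𝓞 F) = a * d - b * c ∧
          ∀ φ : F →+* ℝ, 0 < φ (algebraMap (𝓞 F) F (u : 𝓞 F)))
    (hΓ₀ : ∀ A : (Matrix (Fin 2) (Fin 2) F)ˣ, A ∈ Γ₀ ↔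
      ∃ a b c d : 𝓞 F,
        A.val = !![algebraMap (𝓞 F) F a, algebraMap (𝓞 F) F b;
                   algebraMap (𝓞 F) F c, algebraMap (𝓞 F) F d] ∧
        c ∈ n ∧
        ∃ u : (𝓞 F)ˣ, (u : 𝓞 F) = a * d - b * c ∧
          ∀ φ : F →+* ℝ, 0 < φ (algebraMap (𝓞 F) F (u : 𝓞 F)))
    (v : Fin 2 → F) (hv : v ≠ 0)
    (hs : ∃ γ₀ ∈ Γ₀, ∃ c : Fˣ, (γ₀.val.mulVec ![1, 0]) = (c : F) • v)
    (b : 𝓞 F) :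
    ∃ γ ∈ Γ, ∃ c : Fˣ,
      (!![1, algebraMap (𝓞 F) F b; 0, algebraMap (𝓞 F) F g] :
          Matrix (Fin 2) (Fin 2) F).mulVec v
        = (c : F) • (γ.val.mulVec v) := by
  obtain ⟨γ₀, hγ₀, c, hc⟩ := hs
  obtain ⟨a₀, b₀, c₀, d₀, hmat, hc₀n, u, hu, -⟩ := (hΓ₀ γ₀).mp hγ₀
  set am : 𝓞 F →+* F := algebraMap (𝓞 F) F with ham
  have hc₀q : c₀ ∈ q := (Ideal.le_of_dvd hdvd) hc₀n
  set ui : 𝓞 F := ((u⁻¹ : (𝓞 F)ˣ) : 𝓞 F) with hui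
  have huu : (u : 𝓞 F) * ui = 1 := u.mul_inv
  have h1 : a₀ * (d₀ * ui) + c₀ * (-b₀ * ui) = 1 := by
    linear_combination huu - ui * hu
  have hmax : q.IsMaximal := Ideal.IsPrime.isMaximal hq hq0
  have hTq : (a₀ + b * c₀) ∉ q := by
    intro hTmem
    have ha₀ : a₀ ∈ q := by
      have := q.sub_mem hTmem (Ideal.mul_mem_left q b hc₀q)
      simpa using this
    have h1q : (1 : 𝓞 F) ∈ q := by
      rw [← h1]
      exact q.add_mem (Ideal.mul_mem_right _ q ha₀) (Ideal.mul_mem_right _ q hc₀q)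
    exact hq.ne_top ((Ideal.eq_top_iff_one q).mpr h1q)
  obtain ⟨p₁, i, hiq, hpi⟩ := hmax.exists_inv hTq
  rw [hg, Ideal.mem_span_singleton] at hiq
  obtain ⟨q₁, rfl⟩ := hiq
  obtain ⟨A, B, C, D, eK, fK, hdet, hCeq, hDeq, hvec1, hvec2⟩ :=
    alpha_cusp_ring_aux a₀ c₀ (d₀ * ui) (-b₀ * ui) b g p₁ q₁ h1 hpi
  have hCn : C ∈ n := hCeq ▸ Ideal.mul_mem_right _ n hc₀n
  have hDn : D - 1 ∈ n := hDeq ▸ Ideal.mul_mem_right _ n hc₀n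
  -- build the matrix over F
  set M : Matrix (Fin 2) (Fin 2) F := !![am A, am B; am C, am D] with hM
  have hMdet : IsUnit M.det := by
    rw [hM, Matrix.det_fin_two_of]
    have : am A * am D - am B * am C = 1 := by
      rw [← map_mul, ← map_mul, ← map_sub, hdet, map_one]
    rw [this]
    exact isUnit_one
  have hMunit : IsUnit M := (Matrix.isUnit_iff_isUnit_det M).mpr hMdet
  refine ⟨hMunit.unit, ?_, 1, ?_⟩
  · refine (hΓ hMunit.unit).mpr ⟨A, B, C, D, ?_, hCn, hDn, 1, ?_, ?_⟩
    · rw [hMunit.unit_spec]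
    · rw [Units.val_one]; exact hdet.symm
    · intro φ
      simp only [Units.val_one, map_one]
      exact one_pos
  · rw [Units.val_one, one_smul, hMunit.unit_spec]
    -- express v in terms of the first column of γ₀
    have hcol : (c : F) • v = ![am a₀, am c₀] := by
      rw [← hc, hmat]
      funext i
      fin_cases i <;>
        simp [Matrix.mulVec, dotProduct, Fin.sum_univ_two]
    have hv' : v = ((c⁻¹ : Fˣ) : F) • ![am a₀, am c₀] := by
      rw [← hcol, smul_smul]
      simp
    rw [hv', Matrix.mulVec_smul, Matrix.mulVec_smul]
    congr 1
    have h1' := congrArg am hvec1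
    have h2' := congrArg am hvec2
    simp only [map_add, map_mul, map_sub] at h1' h2'
    funext i
    fin_cases i
    · simp [hM, Matrix.mulVec, dotProduct, Fin.sum_univ_two]
      linear_combination -h1'
    · simp [hM, Matrix.mulVec, dotProduct, Fin.sum_univ_two]
      linear_combination -h2'
end
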